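/- Let E be a Dedekind complete Φ-algebra, a ≤ c ≤ d ≤ b in E, f : [a,b] → E locally band preserving, x ∈ [a,b], and ε, δ ∈ E⁺. Suppose that for all y ∈ [a,b], |x − y| ≤ δ implies |f(x) − f(y)| ≤ ε. Then for every band projection P and every y ∈ [a,b]: P(|x − y|) ≤ P(δ) implies P(|f(x) − f(y)|) ≤ P(ε). -/

import Mathlib

/-!
Glue `x` and `y` along the band: `u = x - P x + P y` agrees with `y` on `B` and with `x` on `Bᵈ`.
It still lies in `[a,b]`, and `|x - u| = P |x - y| ≤ P δ ≤ δ`, so `|f x - f u| ≤ ε`. Since `u - y ∈ Bᵈ`,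
local band preservation gives `f u - f y ∈ Bᵈ`, hence `P |f x - f y| = P |f x - f u| ≤ P ε`.
-/

variable {E : Type*}

section Defs
variable [Lattice E] [AddCommGroup E] [CovariantClass E E (· + ·) (· ≤ ·)]

/-- The disjoint complement of a set. -/
def dComp (A : Set E) : Set E := {x | ∀ a ∈ A, |x| ⊓ |a| = 0}

/-- A band (in a space with the projection property) is a set equal to its double
disjoint complement. -/
def IsBand (B : Set E) : Prop := dComp (dComp B) = B

/-- The band generated by an element. -/
def bandGen (u : E) : Set E := dComp (dComp ({u} : Set E))

/-- `P` is the band projection onto `B`: every `x` decomposes as `P x ∈ B` plus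
`x - P x ∈ Bᵈ`. -/
def IsBandProjection (B : Set E) (P : E → E) : Prop :=
  (∀ x, P x ∈ B) ∧ (∀ x, x - P x ∈ dComp B)

/-- `u` is a weak order unit of the band `B`. -/
def IsWeakUnitOf (B : Set E) (u : E) : Prop :=
  u ∈ B ∧ 0 ≤ u ∧ ∀ z ∈ B, u ⊓ |z| = 0 → z = 0

/-- `u` is a weak order unit of `E`. -/
def IsWeakUnit (u : E) : Prop := 0 ≤ u ∧ ∀ z : E, u ⊓ |z| = 0 → z = 0

end Defs

lemma neg_mem_dComp [Lattice E] [AddCommGroup E] {A : Set E} {u : E} (hu : u ∈ dComp A) :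
    -u ∈ dComp A := by
  intro z hz
  rw [abs_neg]
  exact hu z hz

section LatticeOrderedGroup
variable [Lattice E] [AddCommGroup E] [CovariantClass E E (· + ·) (· ≤ ·)]

lemma add_inf_le_inf_add_inf {p q w : E} (hp : 0 ≤ p) (hq : 0 ≤ q) (hw : 0 ≤ w) :
    (p + q) ⊓ w ≤ p ⊓ w + q ⊓ w := by
  rw [inf_add, add_inf, add_inf]
  refine le_inf (le_inf inf_le_left ?_) (le_inf ?_ ?_)
  · exact inf_le_right.trans (le_add_of_nonneg_left hp)
  · exact inf_le_right.trans (le_add_of_nonneg_right hq)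
  · exact inf_le_right.trans (le_add_of_nonneg_left hw)

lemma le_of_le_add_of_inf_eq_zero {r s t : E} (hr : 0 ≤ r) (hs : 0 ≤ s) (ht : 0 ≤ t)
    (h : r ≤ t + s) (hrs : r ⊓ s = 0) : r ≤ t :=
  calc r = (t + s) ⊓ r := (inf_eq_right.mpr h).symm
    _ ≤ t ⊓ r + s ⊓ r := add_inf_le_inf_add_inf ht hs hr
    _ = t ⊓ r := by rw [inf_comm s, hrs, add_zero]
    _ ≤ t := inf_le_left

lemma abs_add_eq_add_abs_of_inf_eq_zero {p q : E} (h : |p| ⊓ |q| = 0) :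
    |p + q| = |p| + |q| := by
  have abs_le_abs_add : ∀ r s : E, |r| ⊓ |s| = 0 → |r| ≤ |r + s| := fun r s hrs =>
    le_of_le_add_of_inf_eq_zero (abs_nonneg r) (abs_nonneg s) (abs_nonneg _)
      (by simpa using abs_add_le (r + s) (-s)) hrs
  refine le_antisymm (abs_add_le p q) ?_
  calc |p| + |q| = |p| ⊓ |q| + |p| ⊔ |q| := (inf_add_sup _ _).symm
    _ = |p| ⊔ |q| := by rw [h, zero_add]
    _ ≤ |p + q| := sup_le (abs_le_abs_add p q h)
        (add_comm p q ▸ abs_le_abs_add q p (inf_comm |p| |q| ▸ h))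

lemma eq_zero_of_mem_of_mem_dComp {A : Set E} {z : E} (hz : z ∈ A) (hz' : z ∈ dComp A) :
    z = 0 := by
  have habs : |z| ≤ 0 := (inf_idem |z|).symm.trans_le (hz' z hz).le
  obtain ⟨hle, hneg⟩ := abs_le'.mp habs
  exact le_antisymm hle (neg_nonpos.mp hneg)

lemma abs_mem_dComp {A : Set E} {u : E} (hu : u ∈ dComp A) : |u| ∈ dComp A := by
  intro z hz
  rw [abs_abs]
  exact hu z hz

lemma add_mem_dComp {A : Set E} {u v : E} (hu : u ∈ dComp A) (hv : v ∈ dComp A) :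
    u + v ∈ dComp A := by
  intro z hz
  refine le_antisymm ?_ (le_inf (abs_nonneg _) (abs_nonneg z))
  calc |u + v| ⊓ |z| ≤ (|u| + |v|) ⊓ |z| := inf_le_inf_right _ (abs_add_le u v)
    _ ≤ |u| ⊓ |z| + |v| ⊓ |z| :=
        add_inf_le_inf_add_inf (abs_nonneg u) (abs_nonneg v) (abs_nonneg z)
    _ = 0 := by rw [hu z hz, hv z hz, add_zero]

lemma sub_mem_dComp {A : Set E} {u v : E} (hu : u ∈ dComp A) (hv : v ∈ dComp A) :
    u - v ∈ dComp A :=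
  sub_eq_add_neg u v ▸ add_mem_dComp hu (neg_mem_dComp hv)

namespace IsBand
variable {B : Set E} (hB : IsBand B)
include hB

lemma sub_mem {u v : E} (hu : u ∈ B) (hv : v ∈ B) : u - v ∈ B := by
  rw [← hB] at hu hv ⊢
  exact sub_mem_dComp hu hv

lemma abs_mem {u : E} (hu : u ∈ B) : |u| ∈ B := by
  rw [← hB] at hu ⊢
  exact abs_mem_dComp hu

end IsBand

namespace IsBandProjection
variable {B : Set E} {P : E → E} (hP : IsBandProjection B P)
include hP

lemma eq_of_mem_of_sub_mem_dComp (hB : IsBand B) {x p : E} (hp : p ∈ B)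
    (hxp : x - p ∈ dComp B) : P x = p := by
  have hB' : P x - p ∈ B := hB.sub_mem (hP.1 x) hp
  have hBd : P x - p ∈ dComp B := by
    have := sub_mem_dComp hxp (hP.2 x)
    rwa [sub_sub_sub_cancel_left] at this
  exact sub_eq_zero.mp (eq_zero_of_mem_of_mem_dComp hB' hBd)

lemma map_sub (hB : IsBand B) (u v : E) : P (u - v) = P u - P v := by
  refine hP.eq_of_mem_of_sub_mem_dComp hB (hB.sub_mem (hP.1 u) (hP.1 v)) ?_
  have := sub_mem_dComp (hP.2 u) (hP.2 v)
  rwa [sub_sub_sub_comm] at this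

lemma map_eq_zero_of_mem_dComp {z : E} (hz : z ∈ dComp B) : P z = 0 := by
  refine eq_zero_of_mem_of_mem_dComp (hP.1 z) ?_
  simpa using sub_mem_dComp hz (hP.2 z)

lemma map_eq_of_sub_mem_dComp (hB : IsBand B) {v w : E} (h : w - v ∈ dComp B) : P w = P v :=
  sub_eq_zero.mp (hP.map_sub hB w v ▸ hP.map_eq_zero_of_mem_dComp h)

lemma abs_eq_abs_add_abs (z : E) : |z| = |P z| + |z - P z| := by
  conv_lhs => rw [← add_sub_cancel (P z) z]
  exact abs_add_eq_add_abs_of_inf_eq_zero (inf_comm |z - P z| _ ▸ hP.2 z (P z) (hP.1 z))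

lemma map_nonneg {z : E} (hz : 0 ≤ z) : 0 ≤ P z := by
  have h : P z = |P z| + (|z - P z| - (z - P z)) := by
    rw [← add_sub_assoc, ← hP.abs_eq_abs_add_abs, abs_of_nonneg hz, sub_sub_cancel]
  rw [h]
  exact add_nonneg (abs_nonneg _) (sub_nonneg.mpr (le_abs_self _))

lemma map_le_self {z : E} (hz : 0 ≤ z) : P z ≤ z := by
  have h : z - P z = |z - P z| + (|P z| - P z) := by
    rw [← add_sub_assoc, add_comm, ← hP.abs_eq_abs_add_abs, abs_of_nonneg hz]
  rw [← sub_nonneg, h]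
  exact add_nonneg (abs_nonneg _) (sub_nonneg.mpr (le_abs_self _))

lemma mono (hB : IsBand B) {u v : E} (huv : u ≤ v) : P u ≤ P v := by
  have := hP.map_nonneg (sub_nonneg.mpr huv)
  rwa [hP.map_sub hB, sub_nonneg] at this

lemma map_abs (hB : IsBand B) (z : E) : P |z| = |P z| := by
  refine hP.eq_of_mem_of_sub_mem_dComp hB (hB.abs_mem (hP.1 z)) ?_
  rw [hP.abs_eq_abs_add_abs z, add_sub_cancel_left]
  exact abs_mem_dComp (hP.2 z)

lemma sub_add_nonneg {x y : E} (hx : 0 ≤ x) (hy : 0 ≤ y) : 0 ≤ x - P x + P y :=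
  add_nonneg (sub_nonneg.mpr (hP.map_le_self hx)) (hP.map_nonneg hy)

lemma sub_add_mem_Icc (hB : IsBand B) {a b x y : E} (hx : x ∈ Set.Icc a b)
    (hy : y ∈ Set.Icc a b) : x - P x + P y ∈ Set.Icc a b := by
  constructor
  · have h := hP.sub_add_nonneg (sub_nonneg.mpr hx.1) (sub_nonneg.mpr hy.1)
    rwa [hP.map_sub hB, hP.map_sub hB,
      show x - a - (P x - P a) + (P y - P a) = x - P x + P y - a by abel, sub_nonneg] at h
  · have h := hP.sub_add_nonneg (sub_nonneg.mpr hx.2) (sub_nonneg.mpr hy.2)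
    rwa [hP.map_sub hB, hP.map_sub hB,
      show b - x - (P b - P x) + (P b - P y) = b - (x - P x + P y) by abel, sub_nonneg] at h

end IsBandProjection

end LatticeOrderedGroup

theorem stmt16_general [ConditionallyCompleteLattice E] [CommRing E]
    [CovariantClass E E (· + ·) (· ≤ ·)]
    (a b : E)
    (f : E → E)
    (hlbp : ∀ x ∈ Set.Icc a b, ∀ y ∈ Set.Icc a b, ∀ z : E,
      |x - y| ⊓ |z| = 0 → |f x - f y| ⊓ |z| = 0)
    (x : E) (hx : x ∈ Set.Icc a b)
    (ε δ : E) (hδ : 0 ≤ δ)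
    (h : ∀ y ∈ Set.Icc a b, |x - y| ≤ δ → |f x - f y| ≤ ε) :
    ∀ (B : Set E) (Pr : E → E), IsBand B → IsBandProjection B Pr →
      ∀ y ∈ Set.Icc a b, Pr |x - y| ≤ Pr δ → Pr |f x - f y| ≤ Pr ε := by
  intro B P hB hP y hy hPxy
  set u := x - P x + P y
  have hu : u ∈ Set.Icc a b := hP.sub_add_mem_Icc hB hx hy
  have hxu : |x - u| ≤ δ := by
    rw [show x - u = P x - P y by simp only [u]; abel, ← hP.map_sub hB, ← hP.map_abs hB]
    exact hPxy.trans (hP.map_le_self hδ)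
  have huy : u - y ∈ dComp B := by
    rw [show u - y = (x - P x) - (y - P y) by simp only [u]; abel]
    exact sub_mem_dComp (hP.2 x) (hP.2 y)
  have hfuy : f u - f y ∈ dComp B := fun z hz => hlbp u hu y hy z (huy z hz)
  calc P |f x - f y| = P |f x - f u| := by
        rw [hP.map_abs hB, hP.map_abs hB, hP.map_eq_of_sub_mem_dComp hB]
        rwa [sub_sub_sub_cancel_left]
    _ ≤ P ε := hP.mono hB (h u hu hxu)

/-- an ε-δ estimate for a locally band preserving function on
`[a,b]` localises to every band projection. -/
theorem stmt16 [ConditionallyCompleteLattice E] [CommRing E]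
    [CovariantClass E E (· + ·) (· ≤ ·)]
    (hmulpos : ∀ a b : E, 0 ≤ a → 0 ≤ b → 0 ≤ a * b)
    (hfalg : ∀ a b c : E, a ⊓ b = 0 → 0 ≤ c → (c * a) ⊓ b = 0)
    (a b c d : E) (hac : a ≤ c) (hcd : c ≤ d) (hdb : d ≤ b)
    (f : E → E)
    (hlbp : ∀ x ∈ Set.Icc a b, ∀ y ∈ Set.Icc a b, ∀ z : E,
      |x - y| ⊓ |z| = 0 → |f x - f y| ⊓ |z| = 0)
    (x : E) (hx : x ∈ Set.Icc a b)
    (ε δ : E) (hε : 0 ≤ ε) (hδ : 0 ≤ δ)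
    (h : ∀ y ∈ Set.Icc a b, |x - y| ≤ δ → |f x - f y| ≤ ε) :
    ∀ (B : Set E) (Pr : E → E), IsBand B → IsBandProjection B Pr →
      ∀ y ∈ Set.Icc a b, Pr |x - y| ≤ Pr δ → Pr |f x - f y| ≤ Pr ε :=
  stmt16_general a b f hlbp x hx ε δ hδ h
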